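/- arXiv:2206.06106 — 5 statements merged into one kernel-verified Lean document; each statement's English description precedes it below -/
import Mathlib

section
/- For the covariant Pauli channel Λ, the minimum over all Bloch vectors (x,y,z) with x² + y² + z² ≤ 1 of the von Neumann entropy S(Λ(ρ(x,y,z))) equals h(ξ), where ξ = (1 + p0 − p3)/2 if (p0−p3)² ≥ (2p0+2p3−1)², and ξ = p0 + p3 otherwise. -/
open Matrix

noncomputable section

/-- Pauli matrix X. -/
def PX : Matrix (Fin 2) (Fin 2) ℂ := !![0, 1; 1, 0]

/-- Pauli matrix Y. -/
def PY : Matrix (Fin 2) (Fin 2) ℂ := !![0, -Complex.I; Complex.I, 0]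

/-- Pauli matrix Z. -/
def PZ : Matrix (Fin 2) (Fin 2) ℂ := !![1, 0; 0, -1]

/-- The covariant Pauli channel `Λ(ρ) = p₀ ρ + p₁ (XρX + YρY) + p₃ ZρZ`. -/
def pauliChannel (p0 p1 p3 : ℝ) (ρ : Matrix (Fin 2) (Fin 2) ℂ) : Matrix (Fin 2) (Fin 2) ℂ :=
  (p0 : ℂ) • ρ + (p1 : ℂ) • (PX * ρ * PX + PY * ρ * PY) + (p3 : ℂ) • (PZ * ρ * PZ)

/-- The qubit state with Bloch vector `(x, y, z)`. -/
def blochState (x y z : ℝ) : Matrix (Fin 2) (Fin 2) ℂ :=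
  (1 / 2 : ℂ) • ((1 : Matrix (Fin 2) (Fin 2) ℂ) + (x : ℂ) • PX + (y : ℂ) • PY + (z : ℂ) • PZ)

/-- Von Neumann entropy (base-2) of a Hermitian matrix, via its eigenvalues. -/
def vN {n : ℕ} (A : Matrix (Fin n) (Fin n) ℂ) : ℝ :=
  if h : A.IsHermitian then -∑ i, h.eigenvalues i * Real.logb 2 (h.eigenvalues i) else 0

/-- Multiset of eigenvalues (with multiplicity) of a Hermitian matrix. -/
def eigs {n : ℕ} (A : Matrix (Fin n) (Fin n) ℂ) : Multiset ℝ :=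
  if h : A.IsHermitian then Finset.univ.val.map h.eigenvalues else 0

/-- The binary entropy function `h(t) = -t log₂ t - (1-t) log₂ (1-t)`. -/
def binEnt (t : ℝ) : ℝ := -(t * Real.logb 2 t) - (1 - t) * Real.logb 2 (1 - t)

/-! ### Auxiliary material -/

/-!
The channel acts on Bloch vectors as the diagonal contraction `(x, y, z) ↦ (λx, λy, μz)` with
`λ = p₀ - p₃` and `μ = p₀ - 2p₁ + p₃ = 2p₀ + 2p₃ - 1`. A Bloch state of radius `r` has trace `1`
and determinant `(1 - r²)/4`, so its eigenvalues are `(1 ± r)/2` and its entropy is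
`h((1 + r)/2)`, which decreases in `|r|` on `[0, 1]`. The minimum is therefore attained at the
largest output radius `max(|λ|, |μ|)`, reached at `(1, 0, 0)` or at `(0, 0, 1)`.
-/

lemma binEnt_eq_binEntropy_div_log_two (t : ℝ) : binEnt t = Real.binEntropy t / Real.log 2 := by
  rw [binEnt, Real.binEntropy, Real.logb, Real.logb, Real.log_inv, Real.log_inv]
  ring

lemma binEnt_one_sub (t : ℝ) : binEnt (1 - t) = binEnt t := by
  rw [binEnt_eq_binEntropy_div_log_two, binEnt_eq_binEntropy_div_log_two,
    Real.binEntropy_one_sub]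

lemma binEnt_one_add_abs_div_two (r : ℝ) : binEnt ((1 + |r|) / 2) = binEnt ((1 + r) / 2) := by
  rcases abs_cases r with ⟨h, _⟩ | ⟨h, _⟩
  · rw [h]
  · rw [h, ← binEnt_one_sub]
    ring_nf

lemma binEnt_one_add_div_two_le_of_sq_le {r s : ℝ} (hrs : s ^ 2 ≤ r ^ 2) (hr : r ^ 2 ≤ 1) :
    binEnt ((1 + r) / 2) ≤ binEnt ((1 + s) / 2) := by
  have habs : |s| ≤ |r| := sq_le_sq.mp hrs
  have hr1 : |r| ≤ 1 := by rwa [← sq_le_one_iff_abs_le_one]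
  rw [← binEnt_one_add_abs_div_two r, ← binEnt_one_add_abs_div_two s,
    binEnt_eq_binEntropy_div_log_two, binEnt_eq_binEntropy_div_log_two]
  gcongr ?_ / _
  exact Real.binEntropy_strictAntiOn.antitoneOn
    ⟨by linarith [abs_nonneg s], by linarith⟩ ⟨by linarith [abs_nonneg r], by linarith⟩
    (by linarith)

lemma neg_mul_logb_add_eq_binEnt {u v r : ℝ} (huv : u + v = 1) (hprod : u * v = (1 - r ^ 2) / 4) :
    -(u * Real.logb 2 u + v * Real.logb 2 v) = binEnt ((1 + r) / 2) := by
  obtain rfl : v = 1 - u := by linarith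
  have hroots : (u - (1 + r) / 2) * (u - (1 - r) / 2) = 0 := by linear_combination -hprod
  rcases mul_eq_zero.mp hroots with hu | hu
  · rw [show u = (1 + r) / 2 by linarith, binEnt]
    ring
  · rw [show u = 1 - (1 + r) / 2 by linarith, ← binEnt_one_sub, binEnt]
    ring

lemma vN_eq_binEnt_of_trace_of_det {A : Matrix (Fin 2) (Fin 2) ℂ} (hA : A.IsHermitian) {r : ℝ}
    (htr : A.trace = 1) (hdet : A.det = ((1 - r ^ 2) / 4 : ℝ)) :
    vN A = binEnt ((1 + r) / 2) := by
  rw [vN, dif_pos hA, Fin.sum_univ_two, ← neg_mul_logb_add_eq_binEnt (u := hA.eigenvalues 0)]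
  · have := hA.trace_eq_sum_eigenvalues.symm.trans htr
    rw [Fin.sum_univ_two, RCLike.ofReal_eq_complex_ofReal] at this
    exact_mod_cast this
  · have := hA.det_eq_prod_eigenvalues.symm.trans hdet
    rw [Fin.prod_univ_two, RCLike.ofReal_eq_complex_ofReal] at this
    exact_mod_cast this

lemma blochState_eq (x y z : ℝ) :
    blochState x y z = !![(((1 + z) / 2 : ℝ) : ℂ), (x - y * Complex.I) / 2;
      (x + y * Complex.I) / 2, (((1 - z) / 2 : ℝ) : ℂ)] := by
  ext i j
  fin_cases i <;> fin_cases j <;> simp [blochState, PX, PY, PZ] <;> ring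

lemma blochState_isHermitian (x y z : ℝ) : (blochState x y z).IsHermitian := by
  rw [blochState_eq]
  ext i j
  fin_cases i <;> fin_cases j <;> simp [Complex.ext_iff]

lemma trace_blochState (x y z : ℝ) : (blochState x y z).trace = 1 := by
  rw [blochState_eq, trace_fin_two_of]
  push_cast
  ring

lemma det_blochState (x y z : ℝ) :
    (blochState x y z).det = ((1 - (x ^ 2 + y ^ 2 + z ^ 2)) / 4 : ℝ) := by
  rw [blochState_eq, det_fin_two_of]
  push_cast
  linear_combination (y : ℂ) ^ 2 / 4 * Complex.I_sq

lemma vN_blochState {x y z r : ℝ} (hr : x ^ 2 + y ^ 2 + z ^ 2 = r ^ 2) :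
    vN (blochState x y z) = binEnt ((1 + r) / 2) :=
  vN_eq_binEnt_of_trace_of_det (blochState_isHermitian x y z) (trace_blochState x y z)
    (by rw [det_blochState, hr])

lemma pauliChannel_blochState {p0 p1 p3 : ℝ} (hsum : p0 + 2 * p1 + p3 = 1) (x y z : ℝ) :
    pauliChannel p0 p1 p3 (blochState x y z) =
      blochState ((p0 - p3) * x) ((p0 - p3) * y) ((p0 - 2 * p1 + p3) * z) := by
  rw [blochState_eq, blochState_eq]
  ext i j
  fin_cases i <;> fin_cases j <;> simp [pauliChannel, PX, PY, PZ, Complex.ext_iff]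
  · linear_combination hsum / 2
  · constructor <;> ring
  · constructor <;> ring
  · linear_combination hsum / 2

lemma sq_add_sq_add_sq_mul_le_max {a b x y z : ℝ} (h : x ^ 2 + y ^ 2 + z ^ 2 ≤ 1) :
    (a * x) ^ 2 + (a * y) ^ 2 + (b * z) ^ 2 ≤ max (a ^ 2) (b ^ 2) := by
  have ha := le_max_left (a ^ 2) (b ^ 2)
  have hb := le_max_right (a ^ 2) (b ^ 2)
  nlinarith [mul_le_mul_of_nonneg_right ha (sq_nonneg x),
    mul_le_mul_of_nonneg_right ha (sq_nonneg y), mul_le_mul_of_nonneg_right hb (sq_nonneg z),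
    mul_le_mul_of_nonneg_left h (sq_nonneg a |>.trans ha)]

lemma isLeast_vN_blochState_mul {a b r : ℝ} (hr : r ^ 2 = max (a ^ 2) (b ^ 2)) (hr1 : r ^ 2 ≤ 1) :
    IsLeast {s : ℝ | ∃ x y z : ℝ, x ^ 2 + y ^ 2 + z ^ 2 ≤ 1 ∧
      s = vN (blochState (a * x) (a * y) (b * z))} (binEnt ((1 + r) / 2)) := by
  refine ⟨?_, ?_⟩
  · obtain ⟨x, y, z, hxyz, hnorm⟩ : ∃ x y z : ℝ, x ^ 2 + y ^ 2 + z ^ 2 ≤ 1 ∧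
        (a * x) ^ 2 + (a * y) ^ 2 + (b * z) ^ 2 = r ^ 2 := by
      rcases max_choice (a ^ 2) (b ^ 2) with h | h
      · exact ⟨1, 0, 0, by norm_num, by rw [hr, h]; ring⟩
      · exact ⟨0, 0, 1, by norm_num, by rw [hr, h]; ring⟩
    exact ⟨x, y, z, hxyz, (vN_blochState hnorm).symm⟩
  · rintro _ ⟨x, y, z, hxyz, rfl⟩
    have hnorm := Real.sq_sqrt (by positivity : 0 ≤ (a * x) ^ 2 + (a * y) ^ 2 + (b * z) ^ 2)
    rw [vN_blochState hnorm.symm]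
    refine binEnt_one_add_div_two_le_of_sq_le ?_ hr1
    rw [hnorm, hr]
    exact sq_add_sq_add_sq_mul_le_max hxyz

/-- The minimum output entropy of the covariant Pauli channel over all Bloch states
equals `h(ξ)`, with `ξ = (1+p₀-p₃)/2` if `(p₀-p₃)² ≥ (2p₀+2p₃-1)²` and `ξ = p₀+p₃`
otherwise. -/
theorem pauliChannel_min_output_entropy (p0 p1 p3 : ℝ) (h0 : 0 ≤ p0) (h1 : 0 ≤ p1)
    (h3 : 0 ≤ p3) (hsum : p0 + 2 * p1 + p3 = 1) :
    IsLeast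
      {s : ℝ | ∃ x y z : ℝ, x ^ 2 + y ^ 2 + z ^ 2 ≤ 1 ∧
        s = vN (pauliChannel p0 p1 p3 (blochState x y z))}
      (binEnt (if (p0 - p3) ^ 2 ≥ (2 * p0 + 2 * p3 - 1) ^ 2 then (1 + p0 - p3) / 2
               else p0 + p3)) := by
  have hz : p0 - 2 * p1 + p3 = 2 * p0 + 2 * p3 - 1 := by linarith
  simp only [pauliChannel_blochState hsum, hz]
  have ha : (p0 - p3) ^ 2 ≤ 1 := by nlinarith
  have hb : (2 * p0 + 2 * p3 - 1) ^ 2 ≤ 1 := by nlinarith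
  split_ifs with hab
  · convert isLeast_vN_blochState_mul (max_eq_left hab).symm ha using 2
    ring
  · convert isLeast_vN_blochState_mul (max_eq_right (not_le.mp hab).le).symm hb using 2
    ring

end
end

section
/- If p0, p3 ∈ [0, 1/2] and p0 + p3 ≤ 1, then 2(p0² + p3²) + (1−p0−p3)² − 4(1−p0−p3)√(p0 p3) ≤ 1. Hence the entire entanglement-breaking region of the covariant Pauli channel lies inside its anti-degradable (zero quantum capacity) region. -/
/-- If `p₀, p₃ ∈ [0, 1/2]` and `p₀ + p₃ ≤ 1`, then
`2(p₀² + p₃²) + (1-p₀-p₃)² - 4(1-p₀-p₃)√(p₀p₃) ≤ 1`; i.e. the entanglement-breaking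
region of the covariant Pauli channel lies inside its anti-degradable region. -/
theorem EB_subset_antidegradable (p0 p3 : ℝ) (h0 : 0 ≤ p0) (h0' : p0 ≤ 1 / 2)
    (h3 : 0 ≤ p3) (h3' : p3 ≤ 1 / 2) (hsum : p0 + p3 ≤ 1) :
    2 * (p0 ^ 2 + p3 ^ 2) + (1 - p0 - p3) ^ 2 - 4 * (1 - p0 - p3) * Real.sqrt (p0 * p3) ≤ 1 := by
  set r := Real.sqrt (p0 * p3) with hr
  have hr0 : 0 ≤ r := Real.sqrt_nonneg _
  have hr2 : r ^ 2 = p0 * p3 := Real.sq_sqrt (mul_nonneg h0 h3)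
  have hprod : (1/2 - p0) * (1/2 - p3) ≥ 0 :=
    mul_nonneg (by linarith) (by linarith)
  have hrs : 0 ≤ r * (1 - p0 - p3) := mul_nonneg hr0 (by linarith)
  rcases le_or_gt (p0 + p3) (2/3) with h | h
  · nlinarith [sq_nonneg r, mul_nonneg (mul_nonneg h0 h3) (by linarith : (0:ℝ) ≤ 2 - 3*(p0+p3))]
  · nlinarith [mul_nonneg (by linarith : (0:ℝ) ≤ 3*(p0+p3) - 1) (by linarith : (0:ℝ) ≤ 1 - p0 - p3)]
end

section
/- Let p0, p1 ≥ 0 with p0 + p1 > 0 and consider the channel Λ2(ρ) = (p0 ρ + p1 XρX)/(p0+p1) with complementary channel Λ2^c(ρ(x,y,z)) = [[p0/(p0+p1), √(p0p1) x/(p0+p1)], [√(p0p1) x/(p0+p1), p1/(p0+p1)]]. The anti-degradability criterion for Λ2^c, namely tr(𝒥_{Λ2^c}²) − 4√(det 𝒥_{Λ2^c}) ≤ tr(Λ2^c(I)²), holds for all such p0, p1; equivalently it reduces to (p0 − p1)² ≥ 0. Hence Λ2 is degradable. -/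
open Matrix
open scoped Kronecker

noncomputable section

/-- The complementary channel of `Λ₂(ρ) = (p₀ ρ + p₁ XρX)/(p₀+p₁)`, as a linear map on
(real) 2×2 matrices: on `ρ(x,y,z)` it gives
`(1/(p₀+p₁)) [[p₀, √(p₀p₁)x], [√(p₀p₁)x, p₁]]`. -/
def lam2c (p0 p1 : ℝ) (ρ : Matrix (Fin 2) (Fin 2) ℝ) : Matrix (Fin 2) (Fin 2) ℝ :=
  (p0 + p1)⁻¹ •
    !![p0 * ρ.trace, Real.sqrt (p0 * p1) * (ρ 0 1 + ρ 1 0);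
       Real.sqrt (p0 * p1) * (ρ 0 1 + ρ 1 0), p1 * ρ.trace]

/-- The Choi matrix `𝒥_Φ = 2(Φ⊗I)(|φ⁺⟩⟨φ⁺|) = ∑_{i,j} Φ(|i⟩⟨j|) ⊗ |i⟩⟨j|` of the
complementary channel `Λ₂ᶜ`. -/
def choiLam2c (p0 p1 : ℝ) : Matrix (Fin 2 × Fin 2) (Fin 2 × Fin 2) ℝ :=
  ∑ i : Fin 2, ∑ j : Fin 2,
    lam2c p0 p1 (Matrix.single i j 1) ⊗ₖ Matrix.single i j (1 : ℝ)

/-! In the lexicographic basis the Choi matrix of `Λ₂ᶜ` consists of two copies of the block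
`(p₀+p₁)⁻¹ [[p₀, √(p₀p₁)], [√(p₀p₁), p₁]]`, on `{|00⟩, |11⟩}` and on `{|01⟩, |10⟩}`. This block is
singular, so `det 𝒥 = 0`, and after cancelling `(p₀+p₁)⁻²` the criterion reads
`2p₀² + 2p₁² + 4p₀p₁ ≤ 4p₀² + 4p₁²`, that is `(p₀ - p₁)² ≥ 0`. -/

theorem sum_kronecker_single_apply {m n R : Type*} [Fintype m] [DecidableEq m] [Semiring R]
    (Φ : Matrix m m R → Matrix n n R) (a b : n) (i j : m) :
    (∑ k, ∑ l, Φ (single k l 1) ⊗ₖ single k l (1 : R)) (a, i) (b, j) =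
      Φ (single i j 1) a b := by
  simp [Matrix.sum_apply, kroneckerMap_apply, single_apply, ite_and]

theorem det_fin_four_of_nested_blocks {R : Type*} [CommRing R] (a b c d e f g h : R) :
    !![a, 0, 0, b; 0, e, f, 0; 0, g, h, 0; c, 0, 0, d].det =
      (a * d - b * c) * (e * h - f * g) := by
  simp [det_succ_row_zero, Fin.sum_univ_succ, Fin.succAbove]
  ring

theorem choiLam2c_apply (p0 p1 : ℝ) (a i b j : Fin 2) :
    choiLam2c p0 p1 (a, i) (b, j) = lam2c p0 p1 (single i j 1) a b :=
  sum_kronecker_single_apply _ a b i j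

theorem choiLam2c_submatrix (p0 p1 : ℝ) :
    (choiLam2c p0 p1).submatrix finProdFinEquiv.symm finProdFinEquiv.symm =
      (p0 + p1)⁻¹ • !![p0, 0, 0, √(p0 * p1); 0, p0, √(p0 * p1), 0;
        0, √(p0 * p1), p1, 0; √(p0 * p1), 0, 0, p1] := by
  have lex : ⇑(finProdFinEquiv.symm : Fin (2 * 2) ≃ Fin 2 × Fin 2) =
      ![(0, 0), (0, 1), (1, 0), (1, 1)] := by
    decide
  rw [lex]
  ext x y
  fin_cases x <;> fin_cases y <;> simp [choiLam2c_apply, lam2c]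

theorem det_choiLam2c {p0 p1 : ℝ} (h0 : 0 ≤ p0) (h1 : 0 ≤ p1) :
    (choiLam2c p0 p1).det = 0 := by
  rw [← det_submatrix_equiv_self finProdFinEquiv.symm, choiLam2c_submatrix, det_smul,
    det_fin_four_of_nested_blocks, Real.mul_self_sqrt (mul_nonneg h0 h1)]
  ring

theorem trace_choiLam2c_mul_self (p0 p1 : ℝ) :
    (choiLam2c p0 p1 * choiLam2c p0 p1).trace =
      (p0 + p1)⁻¹ ^ 2 * (2 * p0 ^ 2 + 2 * p1 ^ 2 + 4 * √(p0 * p1) ^ 2) := by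
  simp only [trace, diag_apply, mul_apply, Fintype.sum_prod_type, Fin.sum_univ_two,
    choiLam2c_apply, lam2c]
  -- otherwise `simp` turns `(p0 + p1)⁻¹ ^ 2` into the inverse of an expanded polynomial
  generalize (p0 + p1)⁻¹ = c
  simp
  ring

theorem trace_lam2c_one_mul_self (p0 p1 : ℝ) :
    (lam2c p0 p1 1 * lam2c p0 p1 1).trace = (p0 + p1)⁻¹ ^ 2 * (4 * p0 ^ 2 + 4 * p1 ^ 2) := by
  simp only [lam2c]
  generalize (p0 + p1)⁻¹ = c
  simp [trace_fin_two]
  ring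

theorem lam2_degradable_general (p0 p1 : ℝ) (h0 : 0 ≤ p0) (h1 : 0 ≤ p1) :
    ((choiLam2c p0 p1 * choiLam2c p0 p1).trace - 4 * Real.sqrt (choiLam2c p0 p1).det ≤
        (lam2c p0 p1 1 * lam2c p0 p1 1).trace) ∧
    (((choiLam2c p0 p1 * choiLam2c p0 p1).trace - 4 * Real.sqrt (choiLam2c p0 p1).det ≤
        (lam2c p0 p1 1 * lam2c p0 p1 1).trace) ↔ 0 ≤ (p0 - p1) ^ 2) := by
  have criterion : (choiLam2c p0 p1 * choiLam2c p0 p1).trace -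
      4 * Real.sqrt (choiLam2c p0 p1).det ≤ (lam2c p0 p1 1 * lam2c p0 p1 1).trace := by
    rw [trace_choiLam2c_mul_self, trace_lam2c_one_mul_self, det_choiLam2c h0 h1, Real.sqrt_zero,
      Real.sq_sqrt (mul_nonneg h0 h1)]
    nlinarith [mul_nonneg (sq_nonneg (p0 + p1)⁻¹) (sq_nonneg (p0 - p1))]
  exact ⟨criterion, iff_of_true criterion (sq_nonneg _)⟩

/-- The anti-degradability criterion `tr(𝒥²) - 4√(det 𝒥) ≤ tr(Λ₂ᶜ(I)²)` holds for the
complementary channel of `Λ₂(ρ) = (p₀ ρ + p₁ XρX)/(p₀+p₁)`, for all admissible `p₀, p₁`;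
it is equivalent to `(p₀-p₁)² ≥ 0`. Hence `Λ₂` is degradable. -/
theorem lam2_degradable (p0 p1 : ℝ) (h0 : 0 ≤ p0) (h1 : 0 ≤ p1) (hpos : 0 < p0 + p1) :
    ((choiLam2c p0 p1 * choiLam2c p0 p1).trace - 4 * Real.sqrt (choiLam2c p0 p1).det ≤
        (lam2c p0 p1 1 * lam2c p0 p1 1).trace) ∧
    (((choiLam2c p0 p1 * choiLam2c p0 p1).trace - 4 * Real.sqrt (choiLam2c p0 p1).det ≤
        (lam2c p0 p1 1 * lam2c p0 p1 1).trace) ↔ 0 ≤ (p0 - p1) ^ 2) :=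
  lam2_degradable_general p0 p1 h0 h1

end
end

section
/- For the complementary channel Λ^c of the covariant Pauli channel, every real θ, and every Bloch vector (x,y,z) with x² + y² + z² ≤ 1, setting x' = x cosθ + y sinθ and y' = −x sinθ + y cosθ, one has Λ^c(ρ(x',y',z)) = Ω(θ)† Λ^c(ρ(x,y,z)) Ω(θ), where Ω(θ) is the 4×4 real orthogonal matrix [[1,0,0,0],[0,cosθ,−sinθ,0],[0,sinθ,cosθ,0],[0,0,0,1]]. -/
open Matrix

noncomputable section

/-- The complementary channel of the covariant Pauli channel, applied to the Bloch
state `ρ(x,y,z)`. -/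
def pauliComp (p0 p1 p3 x y z : ℝ) : Matrix (Fin 4) (Fin 4) ℂ :=
  !![(p0 : ℂ), ((Real.sqrt (p0 * p1) * x : ℝ) : ℂ), ((Real.sqrt (p0 * p1) * y : ℝ) : ℂ),
       ((Real.sqrt (p0 * p3) * z : ℝ) : ℂ);
     ((Real.sqrt (p0 * p1) * x : ℝ) : ℂ), (p1 : ℂ), -Complex.I * ((p1 * z : ℝ) : ℂ),
       Complex.I * ((Real.sqrt (p1 * p3) * y : ℝ) : ℂ);
     ((Real.sqrt (p0 * p1) * y : ℝ) : ℂ), Complex.I * ((p1 * z : ℝ) : ℂ), (p1 : ℂ),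
       -Complex.I * ((Real.sqrt (p1 * p3) * x : ℝ) : ℂ);
     ((Real.sqrt (p0 * p3) * z : ℝ) : ℂ), -Complex.I * ((Real.sqrt (p1 * p3) * y : ℝ) : ℂ),
       Complex.I * ((Real.sqrt (p1 * p3) * x : ℝ) : ℂ), (p3 : ℂ)]

/-- The rotation matrix `Ω(θ)` acting on the output environment. -/
def Omega (θ : ℝ) : Matrix (Fin 4) (Fin 4) ℂ :=
  !![1, 0, 0, 0;
     0, ((Real.cos θ : ℝ) : ℂ), ((-Real.sin θ : ℝ) : ℂ), 0;
     0, ((Real.sin θ : ℝ) : ℂ), ((Real.cos θ : ℝ) : ℂ), 0;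
     0, 0, 0, 1]

/-- Covariance of the complementary channel of the covariant Pauli channel under
rotations about the z-axis:
`Λᶜ(ρ(x',y',z)) = Ω(θ)ᴴ Λᶜ(ρ(x,y,z)) Ω(θ)` with
`x' = x cos θ + y sin θ`, `y' = -x sin θ + y cos θ`. -/
theorem pauliComp_covariant (p0 p1 p3 : ℝ) (h0 : 0 ≤ p0) (h1 : 0 ≤ p1) (h3 : 0 ≤ p3)
    (hsum : p0 + 2 * p1 + p3 = 1) (θ x y z : ℝ) (hB : x ^ 2 + y ^ 2 + z ^ 2 ≤ 1) :
    pauliComp p0 p1 p3 (x * Real.cos θ + y * Real.sin θ)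
        (-x * Real.sin θ + y * Real.cos θ) z =
      (Omega θ)ᴴ * pauliComp p0 p1 p3 x y z * Omega θ := by
  have pc : ((Real.cos θ : ℂ)) ^ 2 + ((Real.sin θ : ℂ)) ^ 2 = 1 := by
    have := Real.cos_sq_add_sin_sq θ
    exact_mod_cast congrArg (Complex.ofReal) this
  ext i j
  fin_cases i <;> fin_cases j <;>
    simp [pauliComp, Omega, Matrix.mul_apply, Fin.sum_univ_four, Matrix.conjTranspose_apply,
      Matrix.cons_val_zero, Matrix.cons_val_one, Matrix.head_cons, Matrix.cons_val_succ,
      Matrix.head_fin_const, Matrix.cons_val', Matrix.empty_val', Matrix.cons_val_fin_one, Matrix.vecHead, Matrix.vecTail,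
      Complex.conj_ofReal, Complex.ofReal_neg, Complex.ofReal_mul, Complex.ofReal_add] <;>
    simp only [← Complex.cos_conj, ← Complex.sin_conj, Complex.conj_ofReal,
      ← Complex.ofReal_cos, ← Complex.ofReal_sin] <;>
    first
      | ring1
      | linear_combination (p1 : ℂ) * pc
      | linear_combination (-(p1 : ℂ)) * pc
      | linear_combination (-Complex.I * (p1 : ℂ) * (z : ℂ)) * pc
      | linear_combination (Complex.I * (p1 : ℂ) * (z : ℂ)) * pc

end
end

section
/- For the complementary channel Λ^c of the covariant Pauli channel and every Bloch vector (x,y,z) with x² + y² + z² ≤ 1, the Hermitian matrices Λ^c(ρ(x,y,z)) and Λ^c(ρ(−x,−y,−z)) have the same spectrum (the same eigenvalues with multiplicity). -/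
open Matrix

noncomputable section

open Polynomial in
private lemma myCharmatrixConj {n : Type*} [Fintype n] [DecidableEq n]
    (U A V : Matrix n n ℂ) (hUV : U * V = 1) :
    charmatrix (U * A * V) =
      U.map (C : ℂ →+* ℂ[X]) * charmatrix A * V.map (C : ℂ →+* ℂ[X]) := by
  simp only [charmatrix, RingHom.mapMatrix_apply]
  rw [Matrix.mul_sub, Matrix.sub_mul, Matrix.map_mul, Matrix.map_mul]
  congr 1
  rw [show U.map (C : ℂ →+* ℂ[X]) * scalar n X = scalar n X * U.map (C : ℂ →+* ℂ[X]) from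
    (scalar_commute X (Commute.all X) _).eq.symm, Matrix.mul_assoc, ← Matrix.map_mul, hUV]
  simp

open Polynomial in
private lemma myCharpolyConj {n : Type*} [Fintype n] [DecidableEq n]
    (U A V : Matrix n n ℂ) (hUV : U * V = 1) (hVU : V * U = 1) :
    (U * A * V).charpoly = A.charpoly := by
  have hmap : V.map (C : ℂ →+* ℂ[X]) * U.map (C : ℂ →+* ℂ[X]) = 1 := by
    rw [← Matrix.map_mul, hVU]; simp
  unfold Matrix.charpoly
  rw [myCharmatrixConj U A V hUV, det_mul, det_mul, mul_comm, ← mul_assoc, ← det_mul, hmap]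
  simp

private lemma myCharpolyTranspose {n : Type*} [Fintype n] [DecidableEq n]
    (A : Matrix n n ℂ) : Aᵀ.charpoly = A.charpoly := by
  unfold Matrix.charpoly
  rw [show charmatrix Aᵀ = (charmatrix A)ᵀ by
    ext i j; by_cases h : i = j <;> simp [h, charmatrix_apply, diagonal_apply, eq_comm,
      Ne.symm, transpose_apply]]
  exact det_transpose _

open Polynomial in
private lemma myEigsEqRoots {n : Type*} [Fintype n] [DecidableEq n]
    (A : Matrix n n ℂ) (hA : A.IsHermitian) :
    Finset.univ.val.map (fun i => (hA.eigenvalues i : ℂ)) = A.charpoly.roots := by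
  have h1 : A.charpoly = (diagonal ((fun r : ℝ => (r : ℂ)) ∘ hA.eigenvalues)).charpoly := by
    conv_lhs => rw [hA.spectral_theorem]
    exact myCharpolyConj _ _ _ (by simpa using (hA.eigenvectorUnitary).2.1)
      (by simpa using (hA.eigenvectorUnitary).2.2)
  rw [h1]
  have h2 : (diagonal ((fun r : ℝ => (r : ℂ)) ∘ hA.eigenvalues)).charpoly
      = ((Finset.univ.val.map (fun i => (hA.eigenvalues i : ℂ))).map fun a => X - C a).prod := by
    unfold Matrix.charpoly
    rw [show charmatrix (diagonal ((fun r : ℝ => (r : ℂ)) ∘ hA.eigenvalues))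
        = diagonal (fun i => (X : ℂ[X]) - C (hA.eigenvalues i : ℂ)) by
      ext i j; by_cases h : i = j <;> simp [h, charmatrix_apply, diagonal_apply, Ne.symm]]
    rw [det_diagonal, Multiset.map_map]
    rfl
  rw [h2, roots_multiset_prod_X_sub_C]

/-- The sign-flip unitary `diag(1,-1,-1,-1)`. -/
def U4 : Matrix (Fin 4) (Fin 4) ℂ := diagonal ![1, -1, -1, -1]

private lemma U4_mul_U4 : U4 * U4 = 1 := by
  rw [U4, diagonal_mul_diagonal]
  ext i j
  fin_cases i <;> fin_cases j <;> simp [diagonal]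

private lemma pauliComp_isHermitian (p0 p1 p3 x y z : ℝ) :
    (pauliComp p0 p1 p3 x y z).IsHermitian := by
  rw [Matrix.IsHermitian]
  ext i j
  fin_cases i <;> fin_cases j <;>
    simp [pauliComp, conjTranspose_apply, Complex.conj_ofReal, Complex.ext_iff]

set_option linter.unreachableTactic false in
set_option linter.unusedTactic false in
private lemma pauliComp_neg (p0 p1 p3 x y z : ℝ) :
    pauliComp p0 p1 p3 (-x) (-y) (-z) = U4 * (pauliComp p0 p1 p3 x y z)ᵀ * U4 := by
  ext i j
  fin_cases i <;> fin_cases j <;>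
    · simp only [pauliComp, U4, mul_apply, transpose_apply, Fin.sum_univ_four, diagonal,
        of_apply, cons_val', cons_val_zero, cons_val_one, head_cons, empty_val',
        cons_val_fin_one, head_fin_const, cons_val_two, cons_val_three, tail_cons,
        Matrix.cons_val_zero, Matrix.cons_val_one]
      simp
      all_goals (push_cast; ring)

/-- The spectrum (eigenvalues with multiplicity) of the output of the complementary
channel of the covariant Pauli channel is invariant under `(x,y,z) ↦ (-x,-y,-z)`. -/
theorem pauliComp_spectrum_symmetric (p0 p1 p3 : ℝ) (h0 : 0 ≤ p0) (h1 : 0 ≤ p1)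
    (h3 : 0 ≤ p3) (hsum : p0 + 2 * p1 + p3 = 1) (x y z : ℝ)
    (hB : x ^ 2 + y ^ 2 + z ^ 2 ≤ 1) :
    eigs (pauliComp p0 p1 p3 x y z) = eigs (pauliComp p0 p1 p3 (-x) (-y) (-z)) := by
  have hA := pauliComp_isHermitian p0 p1 p3 x y z
  have hB := pauliComp_isHermitian p0 p1 p3 (-x) (-y) (-z)
  rw [eigs, eigs, dif_pos hA, dif_pos hB]
  refine Multiset.map_injective (f := fun r : ℝ => (r : ℂ)) Complex.ofReal_injective ?_
  rw [Multiset.map_map, Multiset.map_map]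
  have e1 := myEigsEqRoots _ hA
  have e2 := myEigsEqRoots _ hB
  rw [show ((fun r : ℝ => (r : ℂ)) ∘ hA.eigenvalues) = fun i => (hA.eigenvalues i : ℂ) from rfl,
    show ((fun r : ℝ => (r : ℂ)) ∘ hB.eigenvalues) = fun i => (hB.eigenvalues i : ℂ) from rfl,
    e1, e2, pauliComp_neg, myCharpolyConj _ _ _ U4_mul_U4 U4_mul_U4, myCharpolyTranspose]

end
end
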